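/- arXiv:2009.05498 — 7 statements merged into one kernel-verified Lean document; each statement's English description precedes it below -/
import Mathlib

section
/- Let Z be a real-valued integrable random variable with symmetric distribution (Z and -Z have the same law) and let ρ be a law-invariant, cash-invariant, positively homogeneous risk measure on L¹ with ρ(Z) ∈ ℝ. Suppose returns R satisfy: for every π ∈ ℝ^d, X_π := π·(R-r𝟏) has the same law as π·(μ-r𝟏) + Z·√(πᵀΣπ) for a fixed mean vector μ ≠ r𝟏 and positive definite covariance Σ. If ρ(Z) > 0, then for each ν > 0 the infimum of ρ(X_π) over {π : π·(μ-r𝟏) = ν} equals -ν + ν·ρ(Z)/SR_max, where SR_max = √((μ-r𝟏)ᵀΣ⁻¹(μ-r𝟏)), and it is attained at π* = ν·Σ⁻¹(μ-r𝟏)/((μ-r𝟏)ᵀΣ⁻¹(μ-r𝟏)). -/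
/-!
Since `X_π` has the law of `π ⬝ a + √(πᵀΣπ) Z` with `a = μ - r𝟏`, law invariance, cash invariance
and positive homogeneity give `ρ(X_π) = √(πᵀΣπ) ρ(Z) - π ⬝ a`. As `ρ(Z) > 0`, minimising the risk
on the hyperplane `π ⬝ a = ν` means minimising `πᵀΣπ` there, and Cauchy–Schwarz for the inner
product defined by `Σ` gives `(π ⬝ a)² ≤ (πᵀΣπ)(aᵀΣ⁻¹a)`, with equality for `π` parallel to `Σ⁻¹a`.
-/

open MeasureTheory Matrix

namespace Matrix
variable {n : Type*} [Fintype n] [DecidableEq n] {S : Matrix n n ℝ}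

theorem PosDef.sq_dotProduct_le (hS : S.PosDef) (x a : n → ℝ) :
    (x ⬝ᵥ a) ^ 2 ≤ (x ⬝ᵥ S *ᵥ x) * (a ⬝ᵥ S⁻¹ *ᵥ a) := by
  let := S.toSeminormedAddCommGroup hS.posSemidef
  let := S.toInnerProductSpace hS.posSemidef
  have hSb : S *ᵥ S⁻¹ *ᵥ a = a := by
    rw [mulVec_mulVec, mul_nonsing_inv _ (S.isUnit_iff_isUnit_det.mp hS.isUnit), one_mulVec]
  have h := real_inner_mul_inner_self_le x (S⁻¹ *ᵥ a)
  -- the inner product induced by `S` is `⟪x, y⟫ = (S *ᵥ y) ⬝ᵥ star x`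
  change ((S *ᵥ S⁻¹ *ᵥ a) ⬝ᵥ star x) * ((S *ᵥ S⁻¹ *ᵥ a) ⬝ᵥ star x)
    ≤ ((S *ᵥ x) ⬝ᵥ star x) * ((S *ᵥ S⁻¹ *ᵥ a) ⬝ᵥ star (S⁻¹ *ᵥ a)) at h
  simp only [hSb, star_trivial] at h
  rw [dotProduct_comm (S *ᵥ x), dotProduct_comm a x, ← sq] at h
  exact h

theorem PosDef.div_sqrt_le_sqrt_dotProduct_mulVec (hS : S.PosDef) (x a : n → ℝ) :
    (x ⬝ᵥ a) / √(a ⬝ᵥ S⁻¹ *ᵥ a) ≤ √(x ⬝ᵥ S *ᵥ x) := by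
  have hq : 0 ≤ a ⬝ᵥ S⁻¹ *ᵥ a := by
    simpa using hS.inv.posSemidef.dotProduct_mulVec_nonneg a
  calc (x ⬝ᵥ a) / √(a ⬝ᵥ S⁻¹ *ᵥ a) ≤ |x ⬝ᵥ a| / √(a ⬝ᵥ S⁻¹ *ᵥ a) := by
        gcongr; exact le_abs_self _
    _ = √((x ⬝ᵥ a) ^ 2 / (a ⬝ᵥ S⁻¹ *ᵥ a)) := by rw [Real.sqrt_div' _ hq, Real.sqrt_sq_eq_abs]
    _ ≤ √(x ⬝ᵥ S *ᵥ x) := by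
        gcongr
        rcases hq.eq_or_lt with hq0 | hq0
        · simpa [← hq0] using hS.posSemidef.dotProduct_mulVec_nonneg x
        · rw [div_le_iff₀ hq0]; exact hS.sq_dotProduct_le x a

theorem dotProduct_mulVec_smul_inv_mulVec (hS : IsUnit S.det) (c : ℝ) (a : n → ℝ) :
    (c • S⁻¹ *ᵥ a) ⬝ᵥ S *ᵥ (c • S⁻¹ *ᵥ a) = c ^ 2 * (a ⬝ᵥ S⁻¹ *ᵥ a) := by
  rw [mulVec_smul, mulVec_mulVec, mul_nonsing_inv _ hS, one_mulVec, smul_dotProduct,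
    dotProduct_smul, dotProduct_comm, smul_eq_mul, smul_eq_mul]
  ring

end Matrix

theorem risk_eq_of_map_eq_affine {Ω : Type*} [MeasurableSpace Ω] {ℙ : Measure Ω}
    {ρ : (Ω → ℝ) → EReal}
    (hlaw : ∀ X₁ X₂ : Ω → ℝ, ℙ.map X₁ = ℙ.map X₂ → ρ X₁ = ρ X₂)
    (hcash : ∀ (X : Ω → ℝ) (c : ℝ), ρ (fun ω => X ω + c) = ρ X - (c : EReal))
    (hpos : ∀ (X : Ω → ℝ) (c : ℝ), 0 ≤ c → ρ (fun ω => c * X ω) = (c : EReal) * ρ X)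
    {Y Z : Ω → ℝ} {m σ : ℝ} (hσ : 0 ≤ σ) (hY : ℙ.map Y = ℙ.map (fun ω => m + Z ω * σ)) :
    ρ Y = σ * ρ Z - m := by
  rw [hlaw _ _ hY, ← hpos Z σ hσ, ← hcash]
  congr 1
  funext ω
  ring

theorem stmt3_general {Ω : Type*} [MeasurableSpace Ω] (ℙ : Measure Ω)
    (d : ℕ) (r : ℝ)
    (μv : Fin d → ℝ) (S : Matrix (Fin d) (Fin d) ℝ)
    (hS : S.PosDef)
    (hμ : μv ≠ fun _ => r)
    (Z : Ω → ℝ)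
    (ρ : (Ω → ℝ) → EReal)
    (hlaw : ∀ X₁ X₂ : Ω → ℝ, ℙ.map X₁ = ℙ.map X₂ → ρ X₁ = ρ X₂)
    (hcash : ∀ (X : Ω → ℝ) (c : ℝ), ρ (fun ω => X ω + c) = ρ X - (c : EReal))
    (hpos : ∀ (X : Ω → ℝ) (c : ℝ), 0 ≤ c → ρ (fun ω => c * X ω) = (c : EReal) * ρ X)
    (ρZ : ℝ) (hρZ : ρ Z = (ρZ : EReal)) (hρZpos : 0 < ρZ)
    (X : (Fin d → ℝ) → Ω → ℝ)
    (hlawX : ∀ π : Fin d → ℝ,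
      ℙ.map (X π) = ℙ.map (fun ω =>
        (π ⬝ᵥ fun i => μv i - r) + Z ω * Real.sqrt (π ⬝ᵥ S.mulVec π)))
    (ν : ℝ) (hν : 0 < ν) :
    let a : Fin d → ℝ := fun i => μv i - r
    let SRmax : ℝ := Real.sqrt (a ⬝ᵥ S⁻¹.mulVec a)
    let πstar : Fin d → ℝ := fun i => ν * (S⁻¹.mulVec a) i / (a ⬝ᵥ S⁻¹.mulVec a)
    (πstar ⬝ᵥ a = ν) ∧
    ρ (X πstar) = ((-ν + ν * ρZ / SRmax : ℝ) : EReal) ∧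
    ∀ π : Fin d → ℝ, π ⬝ᵥ a = ν →
      ((-ν + ν * ρZ / SRmax : ℝ) : EReal) ≤ ρ (X π) := by
  intro a SRmax πstar
  have ha : a ≠ 0 := fun h => hμ (funext fun i => sub_eq_zero.mp (congrFun h i))
  have hq : 0 < a ⬝ᵥ S⁻¹ *ᵥ a := by simpa using hS.inv.dotProduct_mulVec_pos ha
  have hrisk : ∀ π, ρ (X π) = ((√(π ⬝ᵥ S *ᵥ π) * ρZ - π ⬝ᵥ a : ℝ) : EReal) := fun π => by
    rw [risk_eq_of_map_eq_affine hlaw hcash hpos (Real.sqrt_nonneg _) (hlawX π), hρZ]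
    norm_cast
  have hπstar : πstar = (ν / (a ⬝ᵥ S⁻¹ *ᵥ a)) • S⁻¹ *ᵥ a := by
    funext i
    simp only [πstar, Pi.smul_apply, smul_eq_mul]
    ring
  have hreturn : πstar ⬝ᵥ a = ν := by
    rw [hπstar, smul_dotProduct, dotProduct_comm (S⁻¹ *ᵥ a), smul_eq_mul,
      div_mul_cancel₀ _ hq.ne']
  have hsd : √(πstar ⬝ᵥ S *ᵥ πstar) = ν / SRmax := by
    rw [hπstar, dotProduct_mulVec_smul_inv_mulVec (S.isUnit_iff_isUnit_det.mp hS.isUnit),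
      Real.sqrt_mul (sq_nonneg _), Real.sqrt_sq (by positivity), ← Real.div_sqrt (x := a ⬝ᵥ S⁻¹ *ᵥ a), div_mul_div_cancel₀ hq.ne']
  refine ⟨hreturn, ?_, fun π hπ => ?_⟩
  · rw [hrisk, hreturn, hsd]
    norm_cast
    ring
  · have hsd_le : ν / SRmax ≤ √(π ⬝ᵥ S *ᵥ π) := hπ ▸ hS.div_sqrt_le_sqrt_dotProduct_mulVec π a
    rw [hrisk, hπ, EReal.coe_le_coe_iff]
    have hbound := mul_le_mul_of_nonneg_right hsd_le hρZpos.le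
    rw [div_mul_eq_mul_div] at hbound
    linarith

/-- Elliptical returns: for a law-invariant, cash-invariant, positively homogeneous risk
measure with `ρ(Z) > 0`, the minimal risk over portfolios with expected excess return `ν`
equals `-ν + ν ρ(Z)/SR_max` and is attained at `π* = ν Σ⁻¹(μ-r𝟏)/((μ-r𝟏)ᵀΣ⁻¹(μ-r𝟏))`. -/
theorem stmt3 {Ω : Type*} [MeasurableSpace Ω] (ℙ : Measure Ω) [IsProbabilityMeasure ℙ]
    (d : ℕ) (R : Fin d → Ω → ℝ) (r : ℝ)
    (μv : Fin d → ℝ) (S : Matrix (Fin d) (Fin d) ℝ)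
    (hS : S.PosDef)
    (hμ : μv ≠ fun _ => r)
    (Z : Ω → ℝ) (hZint : Integrable Z ℙ)
    (hZsym : ℙ.map Z = ℙ.map (fun ω => -Z ω))
    (ρ : (Ω → ℝ) → EReal)
    (hlaw : ∀ X₁ X₂ : Ω → ℝ, ℙ.map X₁ = ℙ.map X₂ → ρ X₁ = ρ X₂)
    (hcash : ∀ (X : Ω → ℝ) (c : ℝ), ρ (fun ω => X ω + c) = ρ X - (c : EReal))
    (hpos : ∀ (X : Ω → ℝ) (c : ℝ), 0 ≤ c → ρ (fun ω => c * X ω) = (c : EReal) * ρ X)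
    (ρZ : ℝ) (hρZ : ρ Z = (ρZ : EReal)) (hρZpos : 0 < ρZ)
    (X : (Fin d → ℝ) → Ω → ℝ)
    (hX : ∀ π, X π = fun ω => ∑ i, π i * (R i ω - r))
    (hlawX : ∀ π : Fin d → ℝ,
      ℙ.map (X π) = ℙ.map (fun ω =>
        (π ⬝ᵥ fun i => μv i - r) + Z ω * Real.sqrt (π ⬝ᵥ S.mulVec π)))
    (ν : ℝ) (hν : 0 < ν) :
    let a : Fin d → ℝ := fun i => μv i - r
    let SRmax : ℝ := Real.sqrt (a ⬝ᵥ S⁻¹.mulVec a)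
    let πstar : Fin d → ℝ := fun i => ν * (S⁻¹.mulVec a) i / (a ⬝ᵥ S⁻¹.mulVec a)
    (πstar ⬝ᵥ a = ν) ∧
    ρ (X πstar) = ((-ν + ν * ρZ / SRmax : ℝ) : EReal) ∧
    ∀ π : Fin d → ℝ, π ⬝ᵥ a = ν →
      ((-ν + ν * ρZ / SRmax : ℝ) : EReal) ≤ ρ (X π) :=
  stmt3_general ℙ d r μv S hS hμ Z ρ hlaw hcash hpos ρZ hρZ hρZpos X hlawX ν hν
end

section
/- Let ℰ be a subset of 𝒟 ∩ L^∞ (where 𝒟 = {Z ∈ L¹ : Z ≥ 0 a.s., 𝔼[Z] = 1}) that is dense in 𝒟 ∩ L^∞ with respect to the weak-* topology σ(L^∞, L¹). Then for every X ∈ L¹, sup_{Z ∈ ℰ} 𝔼[-ZX] = esssup(-X), where the right side may equal +∞. -/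
/-!
An element `Z` of `𝒟 ∩ L^∞` is a probability density, so `𝔼[-ZX]` is an average of `-X` and
cannot exceed `esssup(-X)`. Conversely, for `t < esssup(-X)` the event `{-X > t}` has positive
probability and its normalized indicator `Z₀ ∈ 𝒟 ∩ L^∞` gives `𝔼[-Z₀X] ≥ t`; weak-* density of
`ℰ`, tested against the single function `X ∈ L¹`, moves `Z₀` into `ℰ` at arbitrarily small cost.
-/

open MeasureTheory

section

variable {Ω : Type*} [MeasurableSpace Ω] {ℙ : Measure Ω} {Z Z₀ X : Ω → ℝ}

-- The paper's `𝒟 ∩ L^∞`.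
def boundedDensities (ℙ : Measure Ω) : Set (Ω → ℝ) :=
  {Z | Integrable Z ℙ ∧ (∀ᵐ ω ∂ℙ, 0 ≤ Z ω) ∧ (∫ ω, Z ω ∂ℙ) = 1 ∧ eLpNorm Z ⊤ ℙ < ⊤}

lemma integrable_mul_of_mem_boundedDensities (hZ : Z ∈ boundedDensities ℙ)
    (hX : Integrable X ℙ) : Integrable (fun ω => Z ω * X ω) ℙ :=
  hX.mul_of_top_right ⟨hZ.1.1, hZ.2.2.2⟩

lemma integral_mul_const_of_mem_boundedDensities (hZ : Z ∈ boundedDensities ℙ) (c : ℝ) :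
    ∫ ω, Z ω * c ∂ℙ = c := by
  rw [integral_mul_const, hZ.2.2.1, one_mul]

lemma integral_neg_mul_le_of_ae_le {m : ℝ} (hZ : Z ∈ boundedDensities ℙ)
    (hX : Integrable X ℙ) (hm : ∀ᵐ ω ∂ℙ, -X ω ≤ m) : ∫ ω, -(Z ω * X ω) ∂ℙ ≤ m :=
  calc ∫ ω, -(Z ω * X ω) ∂ℙ ≤ ∫ ω, Z ω * m ∂ℙ := by
        refine integral_mono_ae (integrable_mul_of_mem_boundedDensities hZ hX).fun_neg
          (hZ.1.mul_const m) ?_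
        filter_upwards [hZ.2.1, hm] with ω hZω hXω
        simpa only [mul_neg] using mul_le_mul_of_nonneg_left hXω hZω
    _ = m := integral_mul_const_of_mem_boundedDensities hZ m

lemma le_integral_neg_mul_of_ae_le {t : ℝ} (hZ : Z ∈ boundedDensities ℙ)
    (hX : Integrable X ℙ) (ht : ∀ᵐ ω ∂ℙ, Z ω ≠ 0 → t ≤ -X ω) : t ≤ ∫ ω, -(Z ω * X ω) ∂ℙ :=
  calc t = ∫ ω, Z ω * t ∂ℙ := (integral_mul_const_of_mem_boundedDensities hZ t).symm
    _ ≤ ∫ ω, -(Z ω * X ω) ∂ℙ := by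
        refine integral_mono_ae (hZ.1.mul_const t)
          (integrable_mul_of_mem_boundedDensities hZ hX).neg ?_
        filter_upwards [hZ.2.1, ht] with ω hZω htω
        rcases eq_or_ne (Z ω) 0 with h0 | h0
        · simp [h0]
        · simpa only [mul_neg] using mul_le_mul_of_nonneg_left (htω h0) hZω

lemma integral_neg_mul_le_essSup (hZ : Z ∈ boundedDensities ℙ) (hX : Integrable X ℙ) :
    ((∫ ω, -(Z ω * X ω) ∂ℙ : ℝ) : EReal) ≤ essSup (fun ω => ((-X ω : ℝ) : EReal)) ℙ := by
  refine EReal.le_of_forall_lt_iff_le.mp fun m hm => ?_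
  have hXm : ∀ᵐ ω ∂ℙ, -X ω ≤ m :=
    (ae_lt_of_essSup_lt hm).mono fun ω h => (EReal.coe_lt_coe_iff.mp h).le
  exact_mod_cast integral_neg_mul_le_of_ae_le hZ hX hXm

lemma measure_setOf_lt_ne_zero_of_lt_essSup {f : Ω → ℝ} {t : ℝ}
    (ht : (t : EReal) < essSup (fun ω => (f ω : EReal)) ℙ) : ℙ {ω | t < f ω} ≠ 0 := by
  intro h
  have hft : ∀ᵐ ω ∂ℙ, f ω ≤ t := by
    rw [ae_iff]
    simpa only [not_le] using h
  refine ht.not_ge (essSup_le_of_ae_le _ ?_)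
  filter_upwards [hft] with ω hω
  exact EReal.coe_le_coe_iff.mpr hω

lemma indicator_const_inv_mem_boundedDensities [IsFiniteMeasure ℙ] {A : Set Ω}
    (hA : MeasurableSet A) (hA0 : ℙ A ≠ 0) :
    A.indicator (fun _ => (ℙ.real A)⁻¹) ∈ boundedDensities ℙ := by
  have hpos : 0 < ℙ.real A := ENNReal.toReal_pos hA0 (measure_ne_top ℙ A)
  refine ⟨(integrable_const _).indicator hA,
    .of_forall (Set.indicator_nonneg fun _ _ => inv_nonneg.mpr hpos.le), ?_,
    (memLp_indicator_const ⊤ hA _ (.inr (measure_ne_top ℙ A))).2⟩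
  rw [integral_indicator_const _ hA, smul_eq_mul, mul_inv_cancel₀ hpos.ne']

lemma exists_mem_boundedDensities_le_integral_neg_mul [IsFiniteMeasure ℙ]
    (hX : Integrable X ℙ) {t : ℝ} (ht : (t : EReal) < essSup (fun ω => ((-X ω : ℝ) : EReal)) ℙ) :
    ∃ Z₀ ∈ boundedDensities ℙ, t ≤ ∫ ω, -(Z₀ ω * X ω) ∂ℙ := by
  set X' := hX.1.mk X
  have hXX' : X =ᵐ[ℙ] X' := hX.1.ae_eq_mk
  set A := {ω | t < -X' ω}
  have hA : MeasurableSet A :=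
    measurableSet_lt measurable_const hX.1.stronglyMeasurable_mk.measurable.neg
  have hA0 : ℙ A ≠ 0 := measure_setOf_lt_ne_zero_of_lt_essSup
    (ht.trans_eq (essSup_congr_ae (hXX'.fun_comp fun x => ((-x : ℝ) : EReal))))
  have hZ₀ := indicator_const_inv_mem_boundedDensities hA hA0
  refine ⟨_, hZ₀, le_integral_neg_mul_of_ae_le hZ₀ hX ?_⟩
  filter_upwards [hXX'] with ω hω hZω
  rw [hω]
  exact (Set.mem_of_indicator_ne_zero hZω : ω ∈ A).le

lemma integral_neg_mul_sub_integral_neg_mul (hZ : Z ∈ boundedDensities ℙ)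
    (hZ₀ : Z₀ ∈ boundedDensities ℙ) (hX : Integrable X ℙ) :
    ∫ ω, -(Z ω * X ω) ∂ℙ - ∫ ω, -(Z₀ ω * X ω) ∂ℙ = -∫ ω, (Z ω - Z₀ ω) * X ω ∂ℙ := by
  rw [← integral_sub (integrable_mul_of_mem_boundedDensities hZ hX).fun_neg
    (integrable_mul_of_mem_boundedDensities hZ₀ hX).fun_neg, ← integral_neg]
  congr 1 with ω
  ring

end

/-- If `ℰ ⊆ 𝒟 ∩ L^∞` is dense with respect to the weak-* topology `σ(L^∞, L¹)`, then for
every `X ∈ L¹`, `sup_{Z ∈ ℰ} 𝔼[-ZX] = esssup(-X)` (possibly `+∞`). -/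
theorem stmt6 {Ω : Type*} [MeasurableSpace Ω] (ℙ : Measure Ω) [IsProbabilityMeasure ℙ]
    (ℰ : Set (Ω → ℝ))
    (hsub : ℰ ⊆ {Z : Ω → ℝ | Integrable Z ℙ ∧ (∀ᵐ ω ∂ℙ, 0 ≤ Z ω) ∧ (∫ ω, Z ω ∂ℙ) = 1 ∧
      eLpNorm Z ⊤ ℙ < ⊤})
    (hdense : ∀ Z₀ ∈ {Z : Ω → ℝ | Integrable Z ℙ ∧ (∀ᵐ ω ∂ℙ, 0 ≤ Z ω) ∧
        (∫ ω, Z ω ∂ℙ) = 1 ∧ eLpNorm Z ⊤ ℙ < ⊤},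
      ∀ (n : ℕ) (g : Fin n → Ω → ℝ), (∀ i, Integrable (g i) ℙ) → ∀ ε : ℝ, 0 < ε →
        ∃ Z ∈ ℰ, ∀ i, |∫ ω, (Z ω - Z₀ ω) * g i ω ∂ℙ| < ε)
    (X : Ω → ℝ) (hX : Integrable X ℙ) :
    (⨆ Z ∈ ℰ, ((∫ ω, -(Z ω * X ω) ∂ℙ : ℝ) : EReal))
      = essSup (fun ω => ((-X ω : ℝ) : EReal)) ℙ := by
  refine le_antisymm (iSup₂_le fun Z hZ => integral_neg_mul_le_essSup (hsub hZ) hX) ?_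
  refine EReal.ge_of_forall_gt_iff_ge.mp fun c hc => ?_
  obtain ⟨t, hct, htM⟩ := EReal.exists_between_coe_real hc
  have hct : c < t := EReal.coe_lt_coe_iff.mp hct
  obtain ⟨Z₀, hZ₀, htZ₀⟩ := exists_mem_boundedDensities_le_integral_neg_mul hX htM
  obtain ⟨Z, hZ, hclose⟩ :=
    hdense Z₀ hZ₀ 1 (fun _ => X) (fun _ => hX) (t - c) (sub_pos.mpr hct)
  have hdiff := integral_neg_mul_sub_integral_neg_mul (hsub hZ) hZ₀ hX
  have hcZ : c ≤ ∫ ω, -(Z ω * X ω) ∂ℙ := by linarith [abs_lt.mp (hclose 0)]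
  exact (EReal.coe_le_coe_iff.mpr hcZ).trans
    (le_iSup₂ (f := fun Z _ => ((∫ ω, -(Z ω * X ω) ∂ℙ : ℝ) : EReal)) Z hZ)
end

section
/- Let 𝒬̃ ⊆ 𝒟 satisfy: every Z̃ ∈ 𝒬̃ is a.s. strictly positive, and for every Z̃ ∈ 𝒬̃ there is an L^∞-dense subset ℰ of 𝒟 ∩ L^∞ such that for all Z ∈ ℰ there is λ ∈ (0,1) with λZ + (1-λ)Z̃ ∈ 𝒬 (a fixed superset of 𝒬̃ in 𝒟). Let Z̃ ∈ 𝒬̃ and let X ∈ L¹ be non-constant with 𝔼[Z̃ X] = 0. Then there exists Z ∈ 𝒬 with 𝔼[-ZX] > 0. -/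
/-!
If `X ≥ 0` a.s., then `Z̃ > 0` and `𝔼[Z̃X] = 0` force `X = 0` a.s., contradicting non-constancy.
So `A = {X < 0}` has positive probability and `W = 1_A / ℙ(A) ∈ 𝒟 ∩ L^∞` has `𝔼[WX] < 0`.
Since `𝔼[ZX] ≤ 𝔼[WX] + ‖Z - W‖_∞ 𝔼|X|`, some `Z ∈ ℰ` close to `W` in `L^∞` still has
`𝔼[ZX] < 0`, and its admissible mixture `λZ + (1 - λ)Z̃ ∈ 𝒬` has `𝔼[(λZ + (1 - λ)Z̃)X] = λ𝔼[ZX] < 0`.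
-/

namespace MeasureTheory

variable {Ω : Type*} [MeasurableSpace Ω] {μ : Measure Ω}

/-- The set `𝒟 ∩ L^∞` of the paper. -/
def boundedDensities (μ : Measure Ω) : Set (Ω → ℝ) :=
  {Z | Integrable Z μ ∧ (∀ᵐ ω ∂μ, 0 ≤ Z ω) ∧ (∫ ω, Z ω ∂μ) = 1 ∧ eLpNorm Z ⊤ μ < ⊤}

lemma memLp_top_of_mem_boundedDensities {Z : Ω → ℝ} (hZ : Z ∈ boundedDensities μ) :
    MemLp Z ⊤ μ :=
  ⟨hZ.1.aestronglyMeasurable, hZ.2.2.2⟩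

lemma indicator_inv_measureReal_mem_boundedDensities [IsFiniteMeasure μ] {A : Set Ω}
    (hA : NullMeasurableSet A μ) (hA0 : μ A ≠ 0) :
    A.indicator (fun _ ↦ (μ.real A)⁻¹) ∈ boundedDensities μ := by
  have hc : 0 < μ.real A := ENNReal.toReal_pos hA0 (measure_ne_top μ A)
  have hbound : ∀ ω, ‖A.indicator (fun _ ↦ (μ.real A)⁻¹) ω‖ ≤ (μ.real A)⁻¹ := fun ω ↦ by
    rw [Real.norm_eq_abs, abs_of_nonneg (Set.indicator_nonneg (fun _ _ ↦ by positivity) ω)]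
    exact Set.indicator_le_self' (fun _ _ ↦ by positivity) ω
  refine ⟨(integrable_const _).indicator₀ hA,
    .of_forall (Set.indicator_nonneg fun _ _ ↦ by positivity), ?_,
    by rw [eLpNorm_exponent_top]; exact eLpNormEssSup_lt_top_of_ae_bound (.of_forall hbound)⟩
  rw [integral_indicator₀ hA, setIntegral_const, smul_eq_mul, mul_inv_cancel₀ hc.ne']

lemma ae_eq_zero_of_integral_mul_eq_zero {Z X : Ω → ℝ} (hZ : ∀ᵐ ω ∂μ, 0 < Z ω)
    (hX : ∀ᵐ ω ∂μ, 0 ≤ X ω) (hZX : Integrable (fun ω ↦ Z ω * X ω) μ)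
    (h : ∫ ω, Z ω * X ω ∂μ = 0) : ∀ᵐ ω ∂μ, X ω = 0 := by
  have hZX0 : ∀ᵐ ω ∂μ, Z ω * X ω = 0 := (integral_eq_zero_iff_of_nonneg_ae
    (by filter_upwards [hZ, hX] with ω hZω hXω using mul_nonneg hZω.le hXω) hZX).mp h
  filter_upwards [hZX0, hZ] with ω hω hZω
  exact (mul_eq_zero.mp hω).resolve_left hZω.ne'

lemma exists_mem_boundedDensities_integral_mul_neg [IsFiniteMeasure μ] {X : Ω → ℝ}
    (hX : Integrable X μ) (hneg : ¬ ∀ᵐ ω ∂μ, 0 ≤ X ω) :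
    ∃ W ∈ boundedDensities μ, ∫ ω, W ω * X ω ∂μ < 0 := by
  set A := {ω | X ω < 0}
  have hA0 : μ A ≠ 0 := by simpa [ae_iff, A] using hneg
  have hA : NullMeasurableSet A μ := nullMeasurableSet_lt hX.aemeasurable aemeasurable_const
  refine ⟨_, indicator_inv_measureReal_mem_boundedDensities hA hA0, ?_⟩
  have hWX : (fun ω ↦ A.indicator (fun _ ↦ (μ.real A)⁻¹) ω * X ω) =
      fun ω ↦ -((μ.real A)⁻¹ * max (-X ω) 0) := by
    funext ω
    by_cases hω : X ω < 0
    · simp [A, hω, max_eq_left (neg_nonneg.mpr hω.le)]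
    · simp [A, hω, max_eq_right (neg_nonpos.mpr (not_lt.mp hω))]
  have hsupp : Function.support (fun ω ↦ max (-X ω) 0) = A := by
    ext ω; simp [A]
  have hpos : 0 < ∫ ω, max (-X ω) 0 ∂μ := by
    rw [integral_pos_iff_support_of_nonneg (f := fun ω ↦ max (-X ω) 0) (fun ω ↦ le_max_right _ _)
      hX.fun_neg.pos_part, hsupp]
    exact pos_iff_ne_zero.mpr hA0
  rw [hWX, integral_neg, integral_const_mul]
  have hc : 0 < μ.real A := ENNReal.toReal_pos hA0 (measure_ne_top μ A)
  have := mul_pos (inv_pos.mpr hc) hpos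
  linarith

lemma ae_abs_le_of_eLpNorm_top_le {f : Ω → ℝ} {ε : ℝ} (hε : 0 ≤ ε)
    (hf : eLpNorm f ⊤ μ ≤ ENNReal.ofReal ε) : ∀ᵐ ω ∂μ, |f ω| ≤ ε := by
  filter_upwards [ae_le_eLpNormEssSup (f := f) (μ := μ)] with ω hω
  rw [← eLpNorm_exponent_top] at hω
  rw [← Real.norm_eq_abs, ← ENNReal.ofReal_le_ofReal_iff hε, ofReal_norm]
  exact hω.trans hf

lemma integral_mul_le_add_of_ae_abs_sub_le {Z W X : Ω → ℝ} {ε : ℝ} (hX : Integrable X μ)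
    (hZX : Integrable (fun ω ↦ Z ω * X ω) μ) (hWX : Integrable (fun ω ↦ W ω * X ω) μ)
    (hZW : ∀ᵐ ω ∂μ, |Z ω - W ω| ≤ ε) :
    ∫ ω, Z ω * X ω ∂μ ≤ ∫ ω, W ω * X ω ∂μ + ε * ∫ ω, |X ω| ∂μ := by
  rw [← integral_const_mul, ← integral_add hWX (hX.abs.const_mul ε)]
  refine integral_mono_ae hZX (hWX.add (hX.abs.const_mul ε)) ?_
  filter_upwards [hZW] with ω hω
  have : (Z ω - W ω) * X ω ≤ ε * |X ω| := calc
    (Z ω - W ω) * X ω ≤ |Z ω - W ω| * |X ω| := by rw [← abs_mul]; exact le_abs_self _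
    _ ≤ ε * |X ω| := mul_le_mul_of_nonneg_right hω (abs_nonneg _)
  linarith [this, sub_mul (Z ω) (W ω) (X ω)]

lemma exists_integral_mul_neg_of_approx {ℰ : Set (Ω → ℝ)} (hℰ : ∀ Z ∈ ℰ, MemLp Z ⊤ μ)
    {W X : Ω → ℝ} (hW : MemLp W ⊤ μ)
    (happrox : ∀ ε : ℝ, 0 < ε → ∃ Z ∈ ℰ, eLpNorm (fun ω ↦ Z ω - W ω) ⊤ μ < ENNReal.ofReal ε)
    (hX : Integrable X μ) (hWX : ∫ ω, W ω * X ω ∂μ < 0) :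
    ∃ Z ∈ ℰ, ∫ ω, Z ω * X ω ∂μ < 0 := by
  set M := ∫ ω, |X ω| ∂μ
  have hM : 0 ≤ M := integral_nonneg fun ω ↦ abs_nonneg (X ω)
  set ε := -(∫ ω, W ω * X ω ∂μ) / (M + 1)
  have hε : 0 < ε := div_pos (neg_pos.mpr hWX) (by linarith)
  have hεM : ε * M < -(∫ ω, W ω * X ω ∂μ) := by
    rw [div_mul_eq_mul_div, div_lt_iff₀ (by linarith)]
    nlinarith
  obtain ⟨Z, hZ, hZW⟩ := happrox ε hε
  refine ⟨Z, hZ, ?_⟩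
  have := integral_mul_le_add_of_ae_abs_sub_le hX (hX.mul_of_top_right (hℰ Z hZ))
    (hX.mul_of_top_right hW) (ae_abs_le_of_eLpNorm_top_le hε.le hZW.le)
  linarith

lemma lintegral_ofReal_lt_lintegral_ofReal_neg_of_integral_neg {f : Ω → ℝ}
    (hf : Integrable f μ) (hneg : ∫ ω, f ω ∂μ < 0) :
    ∫⁻ ω, ENNReal.ofReal (f ω) ∂μ < ∫⁻ ω, ENNReal.ofReal (-f ω) ∂μ := by
  rw [integral_eq_lintegral_pos_part_sub_lintegral_neg_part hf, sub_neg] at hneg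
  exact (ENNReal.toReal_lt_toReal hf.lintegral_lt_top.ne hf.neg.lintegral_lt_top.ne).mp hneg

end MeasureTheory

open MeasureTheory

theorem stmt7_general {Ω : Type*} [MeasurableSpace Ω] (ℙ : Measure Ω) [IsProbabilityMeasure ℙ]
    (𝒬 Qt : Set (Ω → ℝ))
    (hPOS : ∀ Zt ∈ Qt, ∀ᵐ ω ∂ℙ, 0 < Zt ω)
    (hINT : ∀ Zt ∈ Qt, ∃ ℰ : Set (Ω → ℝ),
      ℰ ⊆ {Z : Ω → ℝ | Integrable Z ℙ ∧ (∀ᵐ ω ∂ℙ, 0 ≤ Z ω) ∧ (∫ ω, Z ω ∂ℙ) = 1 ∧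
        eLpNorm Z ⊤ ℙ < ⊤} ∧
      (∀ W ∈ {Z : Ω → ℝ | Integrable Z ℙ ∧ (∀ᵐ ω ∂ℙ, 0 ≤ Z ω) ∧ (∫ ω, Z ω ∂ℙ) = 1 ∧
        eLpNorm Z ⊤ ℙ < ⊤}, ∀ ε : ℝ, 0 < ε →
        ∃ Z ∈ ℰ, eLpNorm (fun ω => Z ω - W ω) ⊤ ℙ < ENNReal.ofReal ε) ∧
      (∀ Z ∈ ℰ, ∃ l ∈ Set.Ioo (0 : ℝ) 1,
        (fun ω => l * Z ω + (1 - l) * Zt ω) ∈ 𝒬))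
    (Zt : Ω → ℝ) (hZt : Zt ∈ Qt)
    (X : Ω → ℝ) (hX : Integrable X ℙ)
    (hXnc : ¬ ∃ c : ℝ, ∀ᵐ ω ∂ℙ, X ω = c)
    (hZtX : Integrable (fun ω => Zt ω * X ω) ℙ)
    (horth : ∫ ω, Zt ω * X ω ∂ℙ = 0) :
    ∃ Z ∈ 𝒬,
      (∫⁻ ω, ENNReal.ofReal (-(Z ω * X ω)) ∂ℙ) = ⊤ ∨
      (∫⁻ ω, ENNReal.ofReal (Z ω * X ω) ∂ℙ) < (∫⁻ ω, ENNReal.ofReal (-(Z ω * X ω)) ∂ℙ) := by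
  obtain ⟨ℰ, hℰ, hdense, hmix⟩ := hINT Zt hZt
  have hℰ_top : ∀ Z ∈ ℰ, MemLp Z ⊤ ℙ := fun Z hZ ↦ memLp_top_of_mem_boundedDensities (hℰ hZ)
  have hXneg : ¬ ∀ᵐ ω ∂ℙ, 0 ≤ X ω := fun hX0 ↦
    hXnc ⟨0, ae_eq_zero_of_integral_mul_eq_zero (hPOS Zt hZt) hX0 hZtX horth⟩
  obtain ⟨W, hW, hWX⟩ := exists_mem_boundedDensities_integral_mul_neg hX hXneg
  obtain ⟨Z, hZ, hZX⟩ := exists_integral_mul_neg_of_approx hℰ_top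
    (memLp_top_of_mem_boundedDensities hW) (hdense W hW) hX hWX
  obtain ⟨l, hl, hmem⟩ := hmix Z hZ
  refine ⟨_, hmem, Or.inr ?_⟩
  have hmixX : (fun ω ↦ (l * Z ω + (1 - l) * Zt ω) * X ω) =
      fun ω ↦ l * (Z ω * X ω) + (1 - l) * (Zt ω * X ω) := by
    funext ω; ring
  have hZXint : Integrable (fun ω ↦ Z ω * X ω) ℙ := hX.mul_of_top_right (hℰ_top Z hZ)
  refine lintegral_ofReal_lt_lintegral_ofReal_neg_of_integral_neg
    (hmixX ▸ (hZXint.const_mul l).add (hZtX.const_mul (1 - l))) ?_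
  rw [hmixX, integral_add (hZXint.const_mul l) (hZtX.const_mul (1 - l)), integral_const_mul,
    integral_const_mul, horth, mul_zero, add_zero]
  exact mul_neg_of_pos_of_neg hl.1 hZX

/-- If `𝒬̃ ⊆ 𝒟` satisfies Conditions POS and INT (relative to `𝒬`), `Z̃ ∈ 𝒬̃`, and `X ∈ L¹`
is non-constant with `𝔼[Z̃X] = 0`, then there is `Z ∈ 𝒬` with `𝔼[-ZX] > 0` (with the
convention that `𝔼[-ZX] = +∞` whenever `𝔼[ZX⁻] = ∞`). -/
theorem stmt7 {Ω : Type*} [MeasurableSpace Ω] (ℙ : Measure Ω) [IsProbabilityMeasure ℙ]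
    (𝒬 Qt : Set (Ω → ℝ))
    (h𝒬D : 𝒬 ⊆ {Z : Ω → ℝ | Integrable Z ℙ ∧ (∀ᵐ ω ∂ℙ, 0 ≤ Z ω) ∧ (∫ ω, Z ω ∂ℙ) = 1})
    (hQtQ : Qt ⊆ 𝒬)
    (hPOS : ∀ Zt ∈ Qt, ∀ᵐ ω ∂ℙ, 0 < Zt ω)
    (hINT : ∀ Zt ∈ Qt, ∃ ℰ : Set (Ω → ℝ),
      ℰ ⊆ {Z : Ω → ℝ | Integrable Z ℙ ∧ (∀ᵐ ω ∂ℙ, 0 ≤ Z ω) ∧ (∫ ω, Z ω ∂ℙ) = 1 ∧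
        eLpNorm Z ⊤ ℙ < ⊤} ∧
      (∀ W ∈ {Z : Ω → ℝ | Integrable Z ℙ ∧ (∀ᵐ ω ∂ℙ, 0 ≤ Z ω) ∧ (∫ ω, Z ω ∂ℙ) = 1 ∧
        eLpNorm Z ⊤ ℙ < ⊤}, ∀ ε : ℝ, 0 < ε →
        ∃ Z ∈ ℰ, eLpNorm (fun ω => Z ω - W ω) ⊤ ℙ < ENNReal.ofReal ε) ∧
      (∀ Z ∈ ℰ, ∃ l ∈ Set.Ioo (0 : ℝ) 1,
        (fun ω => l * Z ω + (1 - l) * Zt ω) ∈ 𝒬))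
    (Zt : Ω → ℝ) (hZt : Zt ∈ Qt)
    (X : Ω → ℝ) (hX : Integrable X ℙ)
    (hXnc : ¬ ∃ c : ℝ, ∀ᵐ ω ∂ℙ, X ω = c)
    (hZtX : Integrable (fun ω => Zt ω * X ω) ℙ)
    (horth : ∫ ω, Zt ω * X ω ∂ℙ = 0) :
    ∃ Z ∈ 𝒬,
      (∫⁻ ω, ENNReal.ofReal (-(Z ω * X ω)) ∂ℙ) = ⊤ ∨
      (∫⁻ ω, ENNReal.ofReal (Z ω * X ω) ∂ℙ) < (∫⁻ ω, ENNReal.ofReal (-(Z ω * X ω)) ∂ℙ) :=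
  stmt7_general ℙ 𝒬 Qt hPOS hINT Zt hZt X hX hXnc hZtX horth
end

section
/- Let 𝒬 ⊆ 𝒟 be uniformly integrable and X ∈ L¹. Then X ∈ L¹(𝒬) := {Y ∈ L⁰ : lim_{a→∞} sup_{Z∈𝒬} 𝔼[Z|Y|𝟙_{|Y|>a}] = 0} if and only if the family X𝒬 = {XZ : Z ∈ 𝒬} is uniformly integrable. -/
/-! Splitting `{|XZ| > b}` along `{|X| > a}` gives
`𝔼[|XZ|; |XZ| > b] ≤ 𝔼[Z|X|; |X| > a] + a 𝔼[|Z|; |Z| > b/a]`, because `|XZ| ≤ a|Z|` where `|X| ≤ a`;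
splitting `{|X| > a}` along `{|XZ| > b}` gives
`𝔼[Z|X|; |X| > a] ≤ 𝔼[|XZ|; |XZ| > b] + b ℙ(|X| > a)`.
Taking suprema over `Z ∈ 𝒬` and letting first the inner and then the outer threshold tend to
infinity yields the two implications; in the second one `ℙ(|X| > a) → 0` because `X` is
integrable. -/

open MeasureTheory Filter
open scoped ENNReal Topology

/-- Uniform integrability of a family of functions:
`lim_{a→∞} sup_{Y ∈ G} 𝔼[|Y| 𝟙_{|Y|>a}] = 0`. -/
def UnifIntFamily {Ω : Type*} [MeasurableSpace Ω] (ℙ : Measure Ω)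
    (G : Set (Ω → ℝ)) : Prop :=
  Tendsto (fun a : ℝ => ⨆ Y ∈ G, ∫⁻ ω in {ω | a < |Y ω|}, ENNReal.ofReal |Y ω| ∂ℙ)
    atTop (nhds 0)

namespace ENNReal

theorem tendsto_nhds_zero_of_forall_le {α ι : Type*} {l : Filter α} [l.NeBot] {l' : Filter ι}
    [l'.NeBot] {F : α → ℝ≥0∞} {G : ι → ℝ≥0∞} {u : ι → α → ℝ≥0∞} (hG : Tendsto G l' (𝓝 0))
    (hu : ∀ᶠ i in l', Tendsto (u i) l (𝓝 (G i))) (hF : ∀ᶠ i in l', ∀ x, F x ≤ u i x) :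
    Tendsto F l (𝓝 0) := by
  refine tendsto_of_le_liminf_of_limsup_le bot_le (ge_of_tendsto hG ?_)
  filter_upwards [hu, hF] with i hui hFi
  exact (limsup_le_limsup (Eventually.of_forall hFi)).trans hui.limsup_eq.le

theorem tendsto_nhds_zero_of_le_add_mul_div {F G H : ℝ → ℝ≥0∞} (hG : Tendsto G atTop (𝓝 0))
    (hH : Tendsto H atTop (𝓝 0)) (hle : ∀ a > 0, ∀ b, F b ≤ G a + ENNReal.ofReal a * H (b / a)) :
    Tendsto F atTop (𝓝 0) := by
  refine tendsto_nhds_zero_of_forall_le hG ?_ ((eventually_gt_atTop 0).mono hle)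
  filter_upwards [eventually_gt_atTop 0] with a ha
  simpa using tendsto_const_nhds.add
    (ENNReal.Tendsto.const_mul (hH.comp (tendsto_id.atTop_div_const ha)) (.inr ofReal_ne_top))

theorem tendsto_nhds_zero_of_le_add_mul {F G P : ℝ → ℝ≥0∞} (hG : Tendsto G atTop (𝓝 0))
    (hP : Tendsto P atTop (𝓝 0)) (hle : ∀ a b, F a ≤ G b + ENNReal.ofReal b * P a) :
    Tendsto F atTop (𝓝 0) :=
  tendsto_nhds_zero_of_forall_le hG (.of_forall fun b => by
    simpa using tendsto_const_nhds.add (ENNReal.Tendsto.const_mul hP (.inr ofReal_ne_top)))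
    (.of_forall fun b a => hle a b)

end ENNReal

section Tails

variable {Ω : Type*} [MeasurableSpace Ω] {μ : Measure Ω}

theorem MeasureTheory.Integrable.tendsto_measure_abs_gt {X : Ω → ℝ} (hX : Integrable X μ) :
    Tendsto (fun a : ℝ => μ {ω | a < |X ω|}) atTop (𝓝 0) := by
  have hempty : (⋂ a : ℝ, {ω | a < |X ω|}) = ∅ :=
    Set.eq_empty_of_forall_notMem fun ω hω => lt_irrefl |X ω| (Set.mem_iInter.1 hω |X ω|)
  have hfin : μ {ω | 1 < |X ω|} ≠ ∞ := by
    simpa only [Real.norm_eq_abs] using (hX.measure_norm_gt_lt_top one_pos).ne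
  simpa only [hempty, measure_empty, Function.comp_def] using
    tendsto_measure_iInter_atTop (s := fun a : ℝ => {ω | a < |X ω|})
    (fun a => nullMeasurableSet_lt aemeasurable_const hX.aemeasurable.abs)
    (fun a a' h ω hω => lt_of_le_of_lt h hω) ⟨1, hfin⟩

theorem setLIntegral_tail_abs_mul_le {X Z : Ω → ℝ} (hZ : AEMeasurable Z μ) (hZ0 : 0 ≤ᵐ[μ] Z)
    {a : ℝ} (ha : 0 < a) (b : ℝ) :
    ∫⁻ ω in {ω | b < |X ω * Z ω|}, ENNReal.ofReal |X ω * Z ω| ∂μ ≤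
      ∫⁻ ω in {ω | a < |X ω|}, ENNReal.ofReal (Z ω * |X ω|) ∂μ +
        ENNReal.ofReal a * ∫⁻ ω in {ω | b / a < |Z ω|}, ENNReal.ofReal |Z ω| ∂μ := by
  set S := {ω | b < |X ω * Z ω|}
  have hcover : S ⊆ {ω | a < |X ω|} ∪ (S ∩ {ω | |X ω| ≤ a}) := fun ω hω =>
    (lt_or_ge a |X ω|).imp id fun h => ⟨hω, h⟩
  have hweight : ∫⁻ ω in {ω | a < |X ω|}, ENNReal.ofReal |X ω * Z ω| ∂μ ≤
      ∫⁻ ω in {ω | a < |X ω|}, ENNReal.ofReal (Z ω * |X ω|) ∂μ := by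
    refine lintegral_mono_ae (ae_restrict_of_ae (hZ0.mono fun ω hω => le_of_eq ?_))
    rw [abs_mul, abs_of_nonneg hω, mul_comm]
  have hsmall : ∫⁻ ω in S ∩ {ω | |X ω| ≤ a}, ENNReal.ofReal |X ω * Z ω| ∂μ ≤
      ENNReal.ofReal a * ∫⁻ ω in {ω | b / a < |Z ω|}, ENNReal.ofReal |Z ω| ∂μ := by
    have hXZ : ∀ ω ∈ S ∩ {ω | |X ω| ≤ a}, |X ω * Z ω| ≤ a * |Z ω| := fun ω hω => by
      rw [abs_mul]; exact mul_le_mul_of_nonneg_right hω.2 (abs_nonneg _)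
    calc ∫⁻ ω in S ∩ {ω | |X ω| ≤ a}, ENNReal.ofReal |X ω * Z ω| ∂μ
        ≤ ∫⁻ ω in S ∩ {ω | |X ω| ≤ a}, ENNReal.ofReal a * ENNReal.ofReal |Z ω| ∂μ := by
          refine setLIntegral_mono_ae (by fun_prop) (ae_of_all _ fun ω hω => ?_)
          rw [← ENNReal.ofReal_mul ha.le]
          exact ENNReal.ofReal_le_ofReal (hXZ ω hω)
      _ ≤ ∫⁻ ω in {ω | b / a < |Z ω|}, ENNReal.ofReal a * ENNReal.ofReal |Z ω| ∂μ :=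
          lintegral_mono_set fun ω hω => by
            rw [Set.mem_ofPred_eq, div_lt_iff₀ ha, mul_comm]
            exact hω.1.trans_le (hXZ ω hω)
      _ = ENNReal.ofReal a * ∫⁻ ω in {ω | b / a < |Z ω|}, ENNReal.ofReal |Z ω| ∂μ :=
          lintegral_const_mul' _ _ ENNReal.ofReal_ne_top
  calc ∫⁻ ω in S, ENNReal.ofReal |X ω * Z ω| ∂μ
      ≤ ∫⁻ ω in {ω | a < |X ω|} ∪ (S ∩ {ω | |X ω| ≤ a}), ENNReal.ofReal |X ω * Z ω| ∂μ :=
        lintegral_mono_set hcover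
    _ ≤ ∫⁻ ω in {ω | a < |X ω|}, ENNReal.ofReal |X ω * Z ω| ∂μ +
          ∫⁻ ω in S ∩ {ω | |X ω| ≤ a}, ENNReal.ofReal |X ω * Z ω| ∂μ :=
        lintegral_union_le _ _ _
    _ ≤ _ := add_le_add hweight hsmall

theorem setLIntegral_weighted_tail_le (X Z : Ω → ℝ) (a b : ℝ) :
    ∫⁻ ω in {ω | a < |X ω|}, ENNReal.ofReal (Z ω * |X ω|) ∂μ ≤
      ∫⁻ ω in {ω | b < |X ω * Z ω|}, ENNReal.ofReal |X ω * Z ω| ∂μ +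
        ENNReal.ofReal b * μ {ω | a < |X ω|} := by
  set A := {ω | a < |X ω|}
  have hcover : A ⊆ {ω | b < |X ω * Z ω|} ∪ (A ∩ {ω | |X ω * Z ω| ≤ b}) := fun ω hω =>
    (lt_or_ge b |X ω * Z ω|).imp id fun h => ⟨hω, h⟩
  calc ∫⁻ ω in A, ENNReal.ofReal (Z ω * |X ω|) ∂μ
      ≤ ∫⁻ ω in A, ENNReal.ofReal |X ω * Z ω| ∂μ := lintegral_mono fun ω => by
        rw [abs_mul, mul_comm |X ω|]
        exact ENNReal.ofReal_le_ofReal (mul_le_mul_of_nonneg_right (le_abs_self _) (abs_nonneg _))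
    _ ≤ ∫⁻ ω in {ω | b < |X ω * Z ω|} ∪ (A ∩ {ω | |X ω * Z ω| ≤ b}),
          ENNReal.ofReal |X ω * Z ω| ∂μ := lintegral_mono_set hcover
    _ ≤ ∫⁻ ω in {ω | b < |X ω * Z ω|}, ENNReal.ofReal |X ω * Z ω| ∂μ +
          ∫⁻ ω in A ∩ {ω | |X ω * Z ω| ≤ b}, ENNReal.ofReal |X ω * Z ω| ∂μ :=
        lintegral_union_le _ _ _
    _ ≤ ∫⁻ ω in {ω | b < |X ω * Z ω|}, ENNReal.ofReal |X ω * Z ω| ∂μ +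
          ∫⁻ _ in A, ENNReal.ofReal b ∂μ := by
        refine add_le_add le_rfl ((setLIntegral_mono measurable_const fun ω hω => ?_).trans
          (lintegral_mono_set Set.inter_subset_left))
        exact ENNReal.ofReal_le_ofReal hω.2
    _ = _ := by rw [setLIntegral_const]

end Tails

theorem stmt8_general {Ω : Type*} [MeasurableSpace Ω] (ℙ : Measure Ω)
    (𝒬 : Set (Ω → ℝ))
    (h𝒬D : 𝒬 ⊆ {Z : Ω → ℝ | Integrable Z ℙ ∧ (∀ᵐ ω ∂ℙ, 0 ≤ Z ω) ∧ (∫ ω, Z ω ∂ℙ) = 1})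
    (h𝒬UI : UnifIntFamily ℙ 𝒬)
    (X : Ω → ℝ) (hX : Integrable X ℙ) :
    (Tendsto (fun a : ℝ => ⨆ Z ∈ 𝒬, ∫⁻ ω in {ω | a < |X ω|},
        ENNReal.ofReal (Z ω * |X ω|) ∂ℙ) atTop (nhds 0))
      ↔ UnifIntFamily ℙ ((fun Z => fun ω => X ω * Z ω) '' 𝒬) := by
  unfold UnifIntFamily at h𝒬UI ⊢
  simp only [iSup_image]
  constructor
  · intro hXQ
    refine ENNReal.tendsto_nhds_zero_of_le_add_mul_div hXQ h𝒬UI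
      fun a ha b => iSup₂_le fun Z hZ => ?_
    obtain ⟨hZm, hZ0, -⟩ := h𝒬D hZ
    refine (setLIntegral_tail_abs_mul_le hZm.aemeasurable hZ0 ha b).trans ?_
    gcongr <;> apply le_iSup₂_of_le Z hZ le_rfl
  · intro hXQ
    refine ENNReal.tendsto_nhds_zero_of_le_add_mul hXQ hX.tendsto_measure_abs_gt
      fun a b => iSup₂_le fun Z hZ => ?_
    refine (setLIntegral_weighted_tail_le X Z a b).trans ?_
    gcongr
    apply le_iSup₂_of_le Z hZ le_rfl

/-- For `𝒬 ⊆ 𝒟` uniformly integrable and `X ∈ L¹`: `X ∈ L¹(𝒬)` iff the family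
`X𝒬 = {XZ : Z ∈ 𝒬}` is uniformly integrable. -/
theorem stmt8 {Ω : Type*} [MeasurableSpace Ω] (ℙ : Measure Ω) [IsProbabilityMeasure ℙ]
    (𝒬 : Set (Ω → ℝ))
    (h𝒬D : 𝒬 ⊆ {Z : Ω → ℝ | Integrable Z ℙ ∧ (∀ᵐ ω ∂ℙ, 0 ≤ Z ω) ∧ (∫ ω, Z ω ∂ℙ) = 1})
    (h𝒬UI : UnifIntFamily ℙ 𝒬)
    (X : Ω → ℝ) (hX : Integrable X ℙ) :
    (Tendsto (fun a : ℝ => ⨆ Z ∈ 𝒬, ∫⁻ ω in {ω | a < |X ω|},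
        ENNReal.ofReal (Z ω * |X ω|) ∂ℙ) atTop (nhds 0))
      ↔ UnifIntFamily ℙ ((fun Z => fun ω => X ω * Z ω) '' 𝒬) :=
  stmt8_general ℙ 𝒬 h𝒬D h𝒬UI X hX
end

section
/- Let 𝒬 ⊆ 𝒟 be uniformly integrable and suppose R ∈ L¹ is such that R𝒬 = {RZ : Z ∈ 𝒬} is uniformly integrable. Let 𝒬̄ denote the L¹-closure of 𝒬. Then 𝒬̄ and R𝒬̄ are uniformly integrable, and the map Z ↦ 𝔼[-Z(R-r)] from 𝒬̄ to ℝ is continuous with respect to the L¹-norm. -/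
open MeasureTheory Filter
open scoped ENNReal

section

variable {Ω : Type*} [MeasurableSpace Ω] {ℙ : Measure Ω}

noncomputable def tailSup (ℙ : Measure Ω) (G : Set (Ω → ℝ)) (a : ℝ) : ℝ≥0∞ :=
  ⨆ Y ∈ G, ∫⁻ ω in {ω | a < |Y ω|}, ENNReal.ofReal |Y ω| ∂ℙ

def aeSeqClosure (ℙ : Measure Ω) (G : Set (Ω → ℝ)) : Set (Ω → ℝ) :=
  {g | ∃ Y : ℕ → Ω → ℝ, (∀ k, Y k ∈ G) ∧ ∀ᵐ ω ∂ℙ, Tendsto (fun k => Y k ω) atTop (nhds (g ω))}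

theorem le_tailSup {G : Set (Ω → ℝ)} {Y : Ω → ℝ} (hY : Y ∈ G) (a : ℝ) :
    ∫⁻ ω in {ω | a < |Y ω|}, ENNReal.ofReal |Y ω| ∂ℙ ≤ tailSup ℙ G a :=
  le_iSup₂ (f := fun Y (_ : Y ∈ G) => ∫⁻ ω in {ω | a < |Y ω|}, ENNReal.ofReal |Y ω| ∂ℙ) Y hY

theorem setLIntegral_abs_le_tail_add (g : Ω → ℝ) (A : Set Ω) (b : ℝ) :
    ∫⁻ ω in A, ENNReal.ofReal |g ω| ∂ℙ ≤
      (∫⁻ ω in {ω | b < |g ω|}, ENNReal.ofReal |g ω| ∂ℙ) + ENNReal.ofReal b * ℙ A := by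
  set S := {ω | b < |g ω|}
  calc ∫⁻ ω in A, ENNReal.ofReal |g ω| ∂ℙ
      ≤ ∫⁻ ω in A, (S.indicator (fun ω => ENNReal.ofReal |g ω|) ω + ENNReal.ofReal b) ∂ℙ := by
        refine lintegral_mono fun ω => ?_
        by_cases h : b < |g ω|
        · simp [S, h]
        · exact le_add_left (ENNReal.ofReal_le_ofReal (not_lt.1 h))
    _ = (∫⁻ ω in A, S.indicator (fun ω => ENNReal.ofReal |g ω|) ω ∂ℙ)
          + ENNReal.ofReal b * ℙ A := by
        rw [lintegral_add_right _ measurable_const, setLIntegral_const]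
    _ ≤ _ := by
        grw [setLIntegral_le_lintegral, lintegral_indicator_le]

theorem setLIntegral_abs_le_of_mem {G : Set (Ω → ℝ)} {Y : Ω → ℝ} (hY : Y ∈ G) (A : Set Ω)
    (b : ℝ) :
    ∫⁻ ω in A, ENNReal.ofReal |Y ω| ∂ℙ ≤ tailSup ℙ G b + ENNReal.ofReal b * ℙ A :=
  (setLIntegral_abs_le_tail_add Y A b).trans (by gcongr; exact le_tailSup hY b)

theorem setLIntegral_abs_le_of_mem_aeSeqClosure {G : Set (Ω → ℝ)}
    (hGm : ∀ Y ∈ G, AEMeasurable Y ℙ) {g : Ω → ℝ} (hg : g ∈ aeSeqClosure ℙ G)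
    (A : Set Ω) (b : ℝ) :
    ∫⁻ ω in A, ENNReal.ofReal |g ω| ∂ℙ ≤ tailSup ℙ G b + ENNReal.ofReal b * ℙ A := by
  obtain ⟨Y, hYG, hlim⟩ := hg
  calc ∫⁻ ω in A, ENNReal.ofReal |g ω| ∂ℙ
      = ∫⁻ ω in A, liminf (fun k => ENNReal.ofReal |Y k ω|) atTop ∂ℙ :=
        lintegral_congr_ae <| ae_restrict_of_ae <|
          hlim.mono fun ω h => (ENNReal.tendsto_ofReal h.abs).liminf_eq.symm
    _ ≤ liminf (fun k => ∫⁻ ω in A, ENNReal.ofReal |Y k ω| ∂ℙ) atTop :=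
        lintegral_liminf_le' fun k => (hGm _ (hYG k)).abs.ennreal_ofReal.restrict
    _ ≤ tailSup ℙ G b + ENNReal.ofReal b * ℙ A :=
        liminf_le_of_frequently_le' <|
          Frequently.of_forall fun k => setLIntegral_abs_le_of_mem (hYG k) A b

theorem aemeasurable_of_mem_aeSeqClosure {G : Set (Ω → ℝ)} (hGm : ∀ Y ∈ G, AEMeasurable Y ℙ)
    {g : Ω → ℝ} (hg : g ∈ aeSeqClosure ℙ G) : AEMeasurable g ℙ := by
  obtain ⟨Y, hYG, hlim⟩ := hg
  exact aemeasurable_of_tendsto_metrizable_ae' (fun k => hGm _ (hYG k)) hlim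

theorem UnifIntFamily.tendsto_tailSup {G : Set (Ω → ℝ)} (hG : UnifIntFamily ℙ G) :
    Tendsto (tailSup ℙ G) atTop (nhds 0) :=
  hG

theorem UnifIntFamily.mono {G H : Set (Ω → ℝ)} (hG : UnifIntFamily ℙ G) (hHG : H ⊆ G) :
    UnifIntFamily ℙ H :=
  tendsto_of_tendsto_of_tendsto_of_le_of_le tendsto_const_nhds hG (fun _ => zero_le)
    fun _ => biSup_mono hHG

theorem exists_lintegral_abs_le_of_setLIntegral_le [IsFiniteMeasure ℙ] {H : Set (Ω → ℝ)}
    {T : ℝ → ℝ≥0∞} (hT : Tendsto T atTop (nhds 0))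
    (hH : ∀ g ∈ H, ∀ A b, ∫⁻ ω in A, ENNReal.ofReal |g ω| ∂ℙ ≤ T b + ENNReal.ofReal b * ℙ A) :
    ∃ C ≠ ∞, ∀ g ∈ H, ∫⁻ ω, ENNReal.ofReal |g ω| ∂ℙ ≤ C := by
  obtain ⟨b, hb⟩ := (hT.eventually (gt_mem_nhds ENNReal.zero_lt_top)).exists
  refine ⟨T b + ENNReal.ofReal b * ℙ Set.univ, by finiteness, fun g hg => ?_⟩
  simpa using hH g hg Set.univ b

theorem unifIntFamily_of_setLIntegral_le [IsFiniteMeasure ℙ] {H : Set (Ω → ℝ)}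
    {T : ℝ → ℝ≥0∞} (hT : Tendsto T atTop (nhds 0)) (hHm : ∀ g ∈ H, AEMeasurable g ℙ)
    (hH : ∀ g ∈ H, ∀ A b, ∫⁻ ω in A, ENNReal.ofReal |g ω| ∂ℙ ≤ T b + ENNReal.ofReal b * ℙ A) :
    UnifIntFamily ℙ H := by
  obtain ⟨C, hC, hHC⟩ := exists_lintegral_abs_le_of_setLIntegral_le hT hH
  have markov : ∀ g ∈ H, ∀ a > 0, ℙ {ω | a < |g ω|} ≤ C / ENNReal.ofReal a := by
    intro g hg a ha
    calc ℙ {ω | a < |g ω|} ≤ ℙ {ω | ENNReal.ofReal a ≤ ENNReal.ofReal |g ω|} :=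
          measure_mono fun ω h => ENNReal.ofReal_le_ofReal (le_of_lt h)
      _ ≤ (∫⁻ ω, ENNReal.ofReal |g ω| ∂ℙ) / ENNReal.ofReal a :=
          meas_ge_le_lintegral_div (hHm g hg).abs.ennreal_ofReal (by simpa using ha)
            ENNReal.ofReal_ne_top
      _ ≤ C / ENNReal.ofReal a := by gcongr; exact hHC g hg
  refine ENNReal.tendsto_nhds_zero.2 fun ε hε => ?_
  obtain ⟨b, hb⟩ := (ENNReal.tendsto_nhds_zero.1 hT (ε / 2) (ENNReal.half_pos hε.ne')).exists
  have hdecay : Tendsto (fun a => ENNReal.ofReal b * (C / ENNReal.ofReal a)) atTop (nhds 0) := by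
    simpa using ENNReal.Tendsto.const_mul
      (ENNReal.Tendsto.const_div ENNReal.tendsto_ofReal_atTop (Or.inr hC))
      (Or.inr ENNReal.ofReal_ne_top)
  filter_upwards [ENNReal.tendsto_nhds_zero.1 hdecay (ε / 2) (ENNReal.half_pos hε.ne'),
    eventually_gt_atTop 0] with a ha ha0
  refine iSup₂_le fun g hg => ?_
  calc _ ≤ T b + ENNReal.ofReal b * ℙ {ω | a < |g ω|} := hH g hg _ b
    _ ≤ ε / 2 + ε / 2 := by grw [hb, markov g hg a ha0, ha]
    _ = ε := ENNReal.add_halves ε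

theorem UnifIntFamily.aeSeqClosure [IsFiniteMeasure ℙ] {G : Set (Ω → ℝ)}
    (hG : UnifIntFamily ℙ G) (hGm : ∀ Y ∈ G, AEMeasurable Y ℙ) :
    UnifIntFamily ℙ (aeSeqClosure ℙ G) :=
  unifIntFamily_of_setLIntegral_le hG.tendsto_tailSup
    (fun _ hg => aemeasurable_of_mem_aeSeqClosure hGm hg)
    fun _ hg => setLIntegral_abs_le_of_mem_aeSeqClosure hGm hg

theorem UnifIntFamily.integrable [IsFiniteMeasure ℙ] {G : Set (Ω → ℝ)} (hG : UnifIntFamily ℙ G)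
    {Y : Ω → ℝ} (hY : Y ∈ G) (hYm : AEMeasurable Y ℙ) : Integrable Y ℙ := by
  obtain ⟨C, hC, hGC⟩ := exists_lintegral_abs_le_of_setLIntegral_le hG.tendsto_tailSup
    fun _ hY' => setLIntegral_abs_le_of_mem hY'
  refine ⟨hYm.aestronglyMeasurable, ?_⟩
  simp only [HasFiniteIntegral, Real.enorm_eq_ofReal_abs]
  exact (hGC Y hY).trans_lt hC.lt_top

theorem UnifIntFamily.unifIntegrable {G : Set (Ω → ℝ)} (hG : UnifIntFamily ℙ G)
    {s : ℕ → Ω → ℝ} (hs : ∀ n, s n ∈ G) (hsm : ∀ n, AEStronglyMeasurable (s n) ℙ) :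
    UnifIntegrable s 1 ℙ := by
  refine unifIntegrable_of le_rfl ENNReal.one_ne_top hsm fun ε hε => ?_
  obtain ⟨a, ha⟩ := (ENNReal.tendsto_nhds_zero.1 hG.tendsto_tailSup (ENNReal.ofReal ε)
    (ENNReal.ofReal_pos.2 hε)).exists
  refine ⟨(a + 1).toNNReal, fun n => ?_⟩
  calc eLpNorm ({ω | (a + 1).toNNReal ≤ ‖s n ω‖₊}.indicator (s n)) 1 ℙ
      = ∫⁻ ω, {ω | (a + 1).toNNReal ≤ ‖s n ω‖₊}.indicator (fun ω => ‖s n ω‖ₑ) ω ∂ℙ := by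
        simp only [eLpNorm_one_eq_lintegral_enorm, enorm_indicator_eq_indicator_enorm]
    _ ≤ ∫⁻ ω in {ω | (a + 1).toNNReal ≤ ‖s n ω‖₊}, ‖s n ω‖ₑ ∂ℙ := lintegral_indicator_le _ _
    _ ≤ ∫⁻ ω in {ω | a < |s n ω|}, ENNReal.ofReal |s n ω| ∂ℙ := by
        simp only [Real.enorm_eq_ofReal_abs]
        refine lintegral_mono_set fun ω hω => ?_
        have : a + 1 ≤ |s n ω| := by
          simpa [← NNReal.coe_le_coe] using (Real.le_coe_toNNReal (a + 1)).trans hω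
        exact (lt_add_one a).trans_le this
    _ ≤ ENNReal.ofReal ε := (le_tailSup (hs n) a).trans ha

theorem UnifIntFamily.tendsto_integral_of_tendsto_ae [IsFiniteMeasure ℙ] {G : Set (Ω → ℝ)}
    (hG : UnifIntFamily ℙ G) (hGm : ∀ Y ∈ G, AEMeasurable Y ℙ) {s : ℕ → Ω → ℝ}
    (hs : ∀ n, s n ∈ G) {g : Ω → ℝ} (hg : Integrable g ℙ)
    (hlim : ∀ᵐ ω ∂ℙ, Tendsto (fun n => s n ω) atTop (nhds (g ω))) :
    Tendsto (fun n => ∫ ω, s n ω ∂ℙ) atTop (nhds (∫ ω, g ω ∂ℙ)) := by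
  have hsm : ∀ n, AEStronglyMeasurable (s n) ℙ := fun n => (hGm _ (hs n)).aestronglyMeasurable
  exact tendsto_integral_of_L1' g hg.aestronglyMeasurable
    (Eventually.of_forall fun n => hG.integrable (hs n) (hGm _ (hs n)))
    (tendsto_Lp_finite_of_tendsto_ae le_rfl ENNReal.one_ne_top hsm (memLp_one_iff_integrable.2 hg)
      (hG.unifIntegrable hs hsm) hlim)

theorem tendsto_eLpNorm_one_of_tendsto_integral_abs_sub {f : ℕ → Ω → ℝ} {g : Ω → ℝ}
    (hf : ∀ n, Integrable (f n) ℙ) (hg : Integrable g ℙ)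
    (hfg : Tendsto (fun n => ∫ ω, |f n ω - g ω| ∂ℙ) atTop (nhds 0)) :
    Tendsto (fun n => eLpNorm (f n - g) 1 ℙ) atTop (nhds 0) := by
  have h : ∀ n, eLpNorm (f n - g) 1 ℙ = ENNReal.ofReal (∫ ω, |f n ω - g ω| ∂ℙ) := fun n => by
    rw [eLpNorm_one_eq_lintegral_enorm, ← ofReal_integral_norm_eq_lintegral_enorm
      ((hf n).sub hg)]
    rfl
  simpa [h] using ENNReal.tendsto_ofReal hfg

theorem mem_aeSeqClosure_of_tendsto_eLpNorm {G : Set (Ω → ℝ)} {f : ℕ → Ω → ℝ}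
    (hf : ∀ n, f n ∈ G) (hfm : ∀ n, AEStronglyMeasurable (f n) ℙ) {g : Ω → ℝ}
    (hg : AEStronglyMeasurable g ℙ)
    (hfg : Tendsto (fun n => eLpNorm (f n - g) 1 ℙ) atTop (nhds 0)) :
    g ∈ aeSeqClosure ℙ G := by
  obtain ⟨ns, -, hlim⟩ :=
    (tendstoInMeasure_of_tendsto_eLpNorm one_ne_zero hfm hg hfg).exists_seq_tendsto_ae
  exact ⟨fun k => f (ns k), fun k => hf _, hlim⟩

theorem image_mul_aeSeqClosure_subset (R : Ω → ℝ) (G : Set (Ω → ℝ)) :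
    (fun Z ω => R ω * Z ω) '' aeSeqClosure ℙ G ⊆
      aeSeqClosure ℙ ((fun Z ω => R ω * Z ω) '' G) := by
  rintro _ ⟨g, ⟨Y, hYG, hlim⟩, rfl⟩
  exact ⟨fun k ω => R ω * Y k ω, fun k => ⟨Y k, hYG k, rfl⟩,
    hlim.mono fun ω h => h.const_mul (R ω)⟩

theorem tendsto_integral_mul_of_tendsto_eLpNorm [IsFiniteMeasure ℙ] {R : Ω → ℝ}
    {H : Set (Ω → ℝ)} (hRH : UnifIntFamily ℙ ((fun Z ω => R ω * Z ω) '' H))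
    (hR : AEMeasurable R ℙ) (hHm : ∀ g ∈ H, AEMeasurable g ℙ) {f : ℕ → Ω → ℝ}
    (hf : ∀ n, f n ∈ H) {Z : Ω → ℝ} (hZ : Z ∈ H)
    (hfZ : Tendsto (fun n => eLpNorm (f n - Z) 1 ℙ) atTop (nhds 0)) :
    Tendsto (fun n => ∫ ω, R ω * f n ω ∂ℙ) atTop (nhds (∫ ω, R ω * Z ω ∂ℙ)) := by
  have hRHm : ∀ Y ∈ (fun Z ω => R ω * Z ω) '' H, AEMeasurable Y ℙ := by
    rintro _ ⟨g, hg, rfl⟩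
    exact hR.mul (hHm g hg)
  have hRZ : Integrable (fun ω => R ω * Z ω) ℙ := hRH.integrable ⟨Z, hZ, rfl⟩ (hR.mul (hHm Z hZ))
  have hfZ' := tendstoInMeasure_of_tendsto_eLpNorm one_ne_zero
    (fun n => (hHm _ (hf n)).aestronglyMeasurable) (hHm Z hZ).aestronglyMeasurable hfZ
  refine tendsto_of_subseq_tendsto fun ns hns => ?_
  obtain ⟨ms, -, hlim⟩ := (hfZ'.comp hns).exists_seq_tendsto_ae
  exact ⟨ms, hRH.tendsto_integral_of_tendsto_ae hRHm (fun k => ⟨_, hf _, rfl⟩) hRZ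
    (hlim.mono fun ω h => h.const_mul (R ω))⟩

end

/-- If `𝒬 ⊆ 𝒟` and `R𝒬` are uniformly integrable, then the `L¹`-closure `𝒬̄` and `R𝒬̄` are
uniformly integrable, and `Z ↦ 𝔼[-Z(R-r)]` is `L¹`-continuous on `𝒬̄`. -/
theorem stmt9 {Ω : Type*} [MeasurableSpace Ω] (ℙ : Measure Ω) [IsProbabilityMeasure ℙ]
    (𝒬 : Set (Ω → ℝ))
    (h𝒬D : 𝒬 ⊆ {Z : Ω → ℝ | Integrable Z ℙ ∧ (∀ᵐ ω ∂ℙ, 0 ≤ Z ω) ∧ (∫ ω, Z ω ∂ℙ) = 1})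
    (h𝒬UI : UnifIntFamily ℙ 𝒬)
    (R : Ω → ℝ) (hR : Integrable R ℙ)
    (hRQ : UnifIntFamily ℙ ((fun Z => fun ω => R ω * Z ω) '' 𝒬))
    (r : ℝ) :
    let Qbar : Set (Ω → ℝ) := {Z | Integrable Z ℙ ∧ ∃ f : ℕ → Ω → ℝ, (∀ n, f n ∈ 𝒬) ∧
      Tendsto (fun n => ∫ ω, |f n ω - Z ω| ∂ℙ) atTop (nhds 0)}
    UnifIntFamily ℙ Qbar ∧
    UnifIntFamily ℙ ((fun Z => fun ω => R ω * Z ω) '' Qbar) ∧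
    ∀ Z ∈ Qbar, ∀ f : ℕ → Ω → ℝ, (∀ n, f n ∈ Qbar) →
      Tendsto (fun n => ∫ ω, |f n ω - Z ω| ∂ℙ) atTop (nhds 0) →
      Tendsto (fun n => ∫ ω, -(f n ω * (R ω - r)) ∂ℙ) atTop
        (nhds (∫ ω, -(Z ω * (R ω - r)) ∂ℙ)) := by
  intro Qbar
  have h𝒬int : ∀ Y ∈ 𝒬, Integrable Y ℙ := fun Y hY => (h𝒬D hY).1
  have hR𝒬m : ∀ Y ∈ (fun Z ω => R ω * Z ω) '' 𝒬, AEMeasurable Y ℙ := by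
    rintro _ ⟨Z, hZ, rfl⟩
    exact hR.aemeasurable.mul (h𝒬int Z hZ).aemeasurable
  have hQbar : Qbar ⊆ aeSeqClosure ℙ 𝒬 := fun Z ⟨hZ, f, hf, hfZ⟩ =>
    mem_aeSeqClosure_of_tendsto_eLpNorm hf (fun n => (h𝒬int _ (hf n)).aestronglyMeasurable)
      hZ.aestronglyMeasurable
      (tendsto_eLpNorm_one_of_tendsto_integral_abs_sub (fun n => h𝒬int _ (hf n)) hZ hfZ)
  have hRQbar : UnifIntFamily ℙ ((fun Z ω => R ω * Z ω) '' Qbar) :=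
    (hRQ.aeSeqClosure hR𝒬m).mono
      ((Set.image_mono hQbar).trans (image_mul_aeSeqClosure_subset R 𝒬))
  refine ⟨(h𝒬UI.aeSeqClosure fun Y hY => (h𝒬int Y hY).aemeasurable).mono hQbar, hRQbar,
    fun Z hZ f hf hfZ => ?_⟩
  have split : ∀ g ∈ Qbar,
      ∫ ω, -(g ω * (R ω - r)) ∂ℙ = r * ∫ ω, g ω ∂ℙ - ∫ ω, R ω * g ω ∂ℙ := fun g hg => by
    rw [← integral_const_mul, ← integral_sub (hg.1.const_mul r)
      (hRQbar.integrable ⟨g, hg, rfl⟩ (hR.aemeasurable.mul hg.1.aemeasurable))]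
    congr 1 with ω
    ring
  have hfZ' := tendsto_eLpNorm_one_of_tendsto_integral_abs_sub (fun n => (hf n).1) hZ.1 hfZ
  rw [split Z hZ]
  refine Tendsto.congr (fun n => (split _ (hf n)).symm) (Tendsto.sub ?_ ?_)
  · exact (tendsto_integral_of_L1' Z hZ.1.aestronglyMeasurable
      (Eventually.of_forall fun n => (hf n).1) hfZ').const_mul r
  · exact tendsto_integral_mul_of_tendsto_eLpNorm hRQbar hR.aemeasurable
      (fun g hg => hg.1.aemeasurable) hf hZ hfZ'
end

section
/- Let g : [0,∞) → [0,∞) be convex and β > g(1). Define 𝒬^{g,β} = {Z ∈ 𝒟 : 𝔼[g(Z)] ≤ β} and 𝒬̃^{g,β} = {Z ∈ 𝒟 : Z > 0 a.s. and 𝔼[g(Z)] < β}. Then 1 ∈ 𝒬̃^{g,β}; for Z ∈ 𝒬^{g,β}, Z̃ ∈ 𝒬̃^{g,β} and λ ∈ (0,1), λZ̃ + (1-λ)Z ∈ 𝒬̃^{g,β}; and for every Z̃ ∈ 𝒬̃^{g,β} and Z ∈ 𝒟 ∩ L^∞ there is λ ∈ (0,1) with λZ̃ + (1-λ)Z ∈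 𝒬^{g,β}. -/
/-!
The functional `Z ↦ 𝔼[g(Z)]` is convex on nonnegative densities and `𝒟` is convex, so a mix
`λ Z̃ + (1 - λ) Z` with `λ > 0` is again a density, is a.s. positive, and has
`𝔼[g(·)] ≤ λ 𝔼[g(Z̃)] + (1 - λ) 𝔼[g(Z)] < β`. For bounded `Z ≥ 0`, convexity bounds `g(Z)` by
`max (g 0) (g ‖Z‖∞)`, so `𝔼[g(Z)]` is finite and the bound `λ 𝔼[g(Z̃)] + (1 - λ) 𝔼[g(Z)]`
tends to `𝔼[g(Z̃)] < β` as `λ → 1`.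
-/

open MeasureTheory Set Filter Topology
open scoped ENNReal

theorem ENNReal.exists_mem_Ioo_ofReal_mul_add_ofReal_mul_lt {x y c : ℝ≥0∞} (hxc : x < c)
    (hy : y ≠ ∞) :
    ∃ l ∈ Ioo (0 : ℝ) 1, ENNReal.ofReal l * x + ENNReal.ofReal (1 - l) * y < c := by
  have hcont : Continuous fun l : ℝ => ENNReal.ofReal l * x + ENNReal.ofReal (1 - l) * y :=
    ((ENNReal.continuous_mul_const hxc.ne_top).comp ENNReal.continuous_ofReal).add
      ((ENNReal.continuous_mul_const hy).comp (ENNReal.continuous_ofReal.comp (by fun_prop)))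
  have hlim : Tendsto (fun l : ℝ => ENNReal.ofReal l * x + ENNReal.ofReal (1 - l) * y)
      (𝓝[<] 1) (𝓝 x) := by
    simpa using (hcont.tendsto 1).mono_left nhdsWithin_le_nhds
  obtain ⟨l, hlt, hl⟩ :=
    ((hlim.eventually (gt_mem_nhds hxc)).and (Ioo_mem_nhdsLT zero_lt_one)).exists
  exact ⟨l, hl, hlt⟩

theorem ENNReal.ofReal_mul_add_ofReal_mul_lt {x y c : ℝ≥0∞} {a b : ℝ} (hxc : x < c)
    (hyc : y ≤ c) (hc : c ≠ ∞) (ha : 0 < a) (hb : 0 ≤ b) (hab : a + b = 1) :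
    ENNReal.ofReal a * x + ENNReal.ofReal b * y < c :=
  calc ENNReal.ofReal a * x + ENNReal.ofReal b * y
      < ENNReal.ofReal a * c + ENNReal.ofReal b * c := by
        apply ENNReal.add_lt_add_of_lt_of_le
          (ENNReal.mul_ne_top ENNReal.ofReal_ne_top (ne_top_of_le_ne_top hc hyc)) _ (by gcongr)
        exact ENNReal.mul_lt_mul_right (by simpa using ha) ENNReal.ofReal_ne_top hxc
    _ = c := by
        rw [← add_mul, ← ENNReal.ofReal_add ha.le hb, hab, ENNReal.ofReal_one, one_mul]

section Divergence

variable {Ω : Type*} [MeasurableSpace Ω]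

def densitySet (μ : Measure Ω) : Set (Ω → ℝ) :=
  {Z | Integrable Z μ ∧ (∀ᵐ ω ∂μ, 0 ≤ Z ω) ∧ ∫ ω, Z ω ∂μ = 1}

theorem convex_densitySet (μ : Measure Ω) : Convex ℝ (densitySet μ) := by
  rintro X ⟨hXi, hX0, hX1⟩ Y ⟨hYi, hY0, hY1⟩ a b ha hb hab
  refine ⟨(hXi.smul a).add (hYi.smul b), ?_, ?_⟩
  · filter_upwards [hX0, hY0] with ω hXω hYω
    simp only [Pi.add_apply, Pi.smul_apply, smul_eq_mul]
    positivity
  · rw [integral_add' (hXi.smul a) (hYi.smul b)]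
    simp only [Pi.smul_apply, smul_eq_mul]
    rw [integral_const_mul, integral_const_mul, hX1, hY1]
    linarith

variable {g : ℝ → ℝ} {μ : Measure Ω}

theorem ConvexOn.aemeasurable_comp (hg : ConvexOn ℝ (Ici 0) g) {Z : Ω → ℝ}
    (hZ : AEMeasurable Z μ) (hpos : ∀ᵐ ω ∂μ, 0 < Z ω) :
    AEMeasurable (fun ω => g (Z ω)) μ := by
  classical
  have hcont : ContinuousOn g (Ioi 0) := by
    simpa only [interior_Ici] using hg.continuousOn_interior
  -- a convex `g` may jump at `0`, so it is replaced by a measurable function off `(0, ∞)`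
  have hmeas : Measurable ((Ioi 0).piecewise g fun _ => g 1) :=
    hcont.measurable_piecewise continuousOn_const measurableSet_Ioi
  refine (hmeas.comp_aemeasurable hZ).congr ?_
  filter_upwards [hpos] with ω hω
  exact piecewise_eq_of_mem _ _ _ hω

variable (g μ) in
noncomputable def gDivergence (Z : Ω → ℝ) : ℝ≥0∞ :=
  ∫⁻ ω, ENNReal.ofReal (g (Z ω)) ∂μ

theorem gDivergence_smul_add_smul_le (hg : ConvexOn ℝ (Ici 0) g) {X Y : Ω → ℝ}
    (hX : AEMeasurable X μ) (hXpos : ∀ᵐ ω ∂μ, 0 < X ω) (hY : ∀ᵐ ω ∂μ, 0 ≤ Y ω) {a b : ℝ}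
    (ha : 0 ≤ a) (hb : 0 ≤ b) (hab : a + b = 1) :
    gDivergence g μ (a • X + b • Y) ≤
      ENNReal.ofReal a * gDivergence g μ X + ENNReal.ofReal b * gDivergence g μ Y := by
  have hpointwise : ∀ᵐ ω ∂μ, ENNReal.ofReal (g ((a • X + b • Y) ω)) ≤
      ENNReal.ofReal a * ENNReal.ofReal (g (X ω))
        + ENNReal.ofReal b * ENNReal.ofReal (g (Y ω)) := by
    filter_upwards [hXpos, hY] with ω hXω hYω
    rw [← ENNReal.ofReal_mul ha, ← ENNReal.ofReal_mul hb]
    calc ENNReal.ofReal (g (a • X ω + b • Y ω))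
        ≤ ENNReal.ofReal (a • g (X ω) + b • g (Y ω)) :=
          ENNReal.ofReal_le_ofReal (hg.2 hXω.le hYω ha hb hab)
      _ ≤ _ := ENNReal.ofReal_add_le
  have hgX := (hg.aemeasurable_comp hX hXpos).ennreal_ofReal
  calc gDivergence g μ (a • X + b • Y)
      ≤ ∫⁻ ω, ENNReal.ofReal a * ENNReal.ofReal (g (X ω))
          + ENNReal.ofReal b * ENNReal.ofReal (g (Y ω)) ∂μ := lintegral_mono_ae hpointwise
    _ = ENNReal.ofReal a * gDivergence g μ X + ENNReal.ofReal b * gDivergence g μ Y := by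
      rw [lintegral_add_left' (hgX.const_mul _), lintegral_const_mul'' _ hgX,
        lintegral_const_mul' _ _ ENNReal.ofReal_ne_top, gDivergence, gDivergence]

theorem gDivergence_lt_top_of_eLpNorm_lt_top [IsFiniteMeasure μ] (hg : ConvexOn ℝ (Ici 0) g)
    {Y : Ω → ℝ} (hY0 : ∀ᵐ ω ∂μ, 0 ≤ Y ω) (hY : eLpNorm Y ∞ μ < ∞) : gDivergence g μ Y < ∞ := by
  obtain ⟨C, hC⟩ :=
    eLpNormEssSup_lt_top_iff_isBoundedUnder.mp (eLpNorm_exponent_top (f := Y) ▸ hY)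
  have hbound : ∀ᵐ ω ∂μ, ENNReal.ofReal (g (Y ω)) ≤ ENNReal.ofReal (max (g 0) (g C)) := by
    filter_upwards [hY0, hC] with ω hY0ω hCω
    refine ENNReal.ofReal_le_ofReal (hg.le_on_segment self_mem_Ici C.coe_nonneg ?_)
    rw [segment_eq_Icc C.coe_nonneg]
    exact ⟨hY0ω, (Real.le_norm_self _).trans hCω⟩
  calc gDivergence g μ Y ≤ ∫⁻ _, ENNReal.ofReal (max (g 0) (g C)) ∂μ := lintegral_mono_ae hbound
    _ < ∞ := by simp [lintegral_const, ENNReal.mul_lt_top]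

end Divergence

/-- Properties of the dual sets of a `g`-entropic risk measure with divergence level `β`. -/
theorem stmt11 {Ω : Type*} [MeasurableSpace Ω] (ℙ : Measure Ω) [IsProbabilityMeasure ℙ]
    (g : ℝ → ℝ) (hgconv : ConvexOn ℝ (Set.Ici 0) g)
    (hgnonneg : ∀ x : ℝ, 0 ≤ x → 0 ≤ g x)
    (β : ℝ) (hβ : g 1 < β) :
    let 𝒟 : Set (Ω → ℝ) :=
      {Z | Integrable Z ℙ ∧ (∀ᵐ ω ∂ℙ, 0 ≤ Z ω) ∧ ∫ ω, Z ω ∂ℙ = 1}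
    let Q : Set (Ω → ℝ) :=
      {Z | Z ∈ 𝒟 ∧ (∫⁻ ω, ENNReal.ofReal (g (Z ω)) ∂ℙ) ≤ ENNReal.ofReal β}
    let Qt : Set (Ω → ℝ) :=
      {Z | Z ∈ 𝒟 ∧ (∀ᵐ ω ∂ℙ, 0 < Z ω) ∧
        (∫⁻ ω, ENNReal.ofReal (g (Z ω)) ∂ℙ) < ENNReal.ofReal β}
    ((fun _ : Ω => (1 : ℝ)) ∈ Qt) ∧
    (∀ Z ∈ Q, ∀ Zt ∈ Qt, ∀ l : ℝ, l ∈ Set.Ioo (0 : ℝ) 1 →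
      (fun ω => l * Zt ω + (1 - l) * Z ω) ∈ Qt) ∧
    (∀ Zt ∈ Qt, ∀ Z ∈ 𝒟, eLpNorm Z ⊤ ℙ < ⊤ →
      ∃ l ∈ Set.Ioo (0 : ℝ) 1, (fun ω => l * Zt ω + (1 - l) * Z ω) ∈ Q) := by
  intro 𝒟 Q Qt
  have hβ0 : 0 < β := (hgnonneg 1 zero_le_one).trans_lt hβ
  refine ⟨⟨⟨integrable_const 1, ae_of_all _ fun _ => zero_le_one, by simp⟩,
    ae_of_all _ fun _ => zero_lt_one, ?_⟩, ?_, ?_⟩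
  · simpa [ENNReal.ofReal_lt_ofReal_iff hβ0] using hβ
  · rintro Z ⟨hZ, hZβ⟩ Zt ⟨hZt, hZtpos, hZtβ⟩ l ⟨hl0, hl1⟩
    have hl1' : 0 ≤ 1 - l := sub_nonneg.2 hl1.le
    refine ⟨convex_densitySet ℙ hZt hZ hl0.le hl1' (add_sub_cancel l 1), ?_, ?_⟩
    · filter_upwards [hZ.2.1, hZtpos] with ω hZω hZtω
      exact add_pos_of_pos_of_nonneg (mul_pos hl0 hZtω) (mul_nonneg hl1' hZω)
    · exact (gDivergence_smul_add_smul_le hgconv hZt.1.aemeasurable hZtpos hZ.2.1 hl0.le hl1'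
        (add_sub_cancel l 1)).trans_lt
        (ENNReal.ofReal_mul_add_ofReal_mul_lt hZtβ hZβ ENNReal.ofReal_ne_top hl0 hl1'
          (add_sub_cancel l 1))
  · rintro Zt ⟨hZt, hZtpos, hZtβ⟩ Z hZ hZbdd
    obtain ⟨l, ⟨hl0, hl1⟩, hlt⟩ := ENNReal.exists_mem_Ioo_ofReal_mul_add_ofReal_mul_lt hZtβ
      (gDivergence_lt_top_of_eLpNorm_lt_top hgconv hZ.2.1 hZbdd).ne
    have hl1' : 0 ≤ 1 - l := sub_nonneg.2 hl1.le
    exact ⟨l, ⟨hl0, hl1⟩, convex_densitySet ℙ hZt hZ hl0.le hl1' (add_sub_cancel l 1),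
      ((gDivergence_smul_add_smul_le hgconv hZt.1.aemeasurable hZtpos hZ.2.1 hl0.le hl1'
        (add_sub_cancel l 1)).trans_lt hlt).le⟩
end

section
/- Assume ρ : L → (-∞,∞] is cash invariant and positively homogeneous, the market (S⁰,S) is such that Π_ν = {π : 𝔼[X_π] = ν} is nonempty for all ν ∈ ℝ, and define ρ₁ = inf{ρ(X_π) : π ∈ Π₁}. Then the market admits strong ρ-arbitrage (for every portfolio π there is π' with 𝔼[X_{π'}] > 𝔼[X_π] and ρ(X_{π'}) < ρ(X_π)) if and only if ρ₁ < 0. -/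
open MeasureTheory

/-- The market admits strong `ρ`-arbitrage (for every portfolio there is one with strictly
higher expected excess return and strictly lower risk) if and only if
`ρ₁ = inf {ρ(X_π) : 𝔼[X_π] = 1} < 0`. -/
theorem stmt19 {Ω : Type*} [MeasurableSpace Ω] (ℙ : Measure Ω) [IsProbabilityMeasure ℙ]
    (d : ℕ) (R : Fin d → Ω → ℝ) (r : ℝ) (hint : ∀ i, Integrable (R i) ℙ)
    (ρ : (Ω → ℝ) → EReal)
    (hbot : ∀ X : Ω → ℝ, ρ X ≠ ⊥)
    (hcash : ∀ (X : Ω → ℝ) (c : ℝ), ρ (fun ω => X ω + c) = ρ X - (c : EReal))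
    (hpos : ∀ (X : Ω → ℝ) (c : ℝ), 0 ≤ c → ρ (fun ω => c * X ω) = (c : EReal) * ρ X)
    (X : (Fin d → ℝ) → Ω → ℝ)
    (hX : ∀ π, X π = fun ω => ∑ i, π i * (R i ω - r))
    (hPi : ∀ ν : ℝ, ∃ π : Fin d → ℝ, (∫ ω, X π ω ∂ℙ) = ν) :
    (∀ π : Fin d → ℝ, ∃ π' : Fin d → ℝ,
        (∫ ω, X π ω ∂ℙ) < (∫ ω, X π' ω ∂ℙ) ∧ ρ (X π') < ρ (X π))
      ↔ sInf {v : EReal | ∃ π : Fin d → ℝ, (∫ ω, X π ω ∂ℙ) = 1 ∧ v = ρ (X π)} < 0 := by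
  -- scaling of portfolios
  have hscale : ∀ (c : ℝ) (π : Fin d → ℝ),
      X (fun i => c * π i) = fun ω => c * X π ω := by
    intro c π
    rw [hX, hX]
    funext ω
    rw [Finset.mul_sum]
    simp [mul_assoc]
  have hscaleInt : ∀ (c : ℝ) (π : Fin d → ℝ),
      (∫ ω, X (fun i => c * π i) ω ∂ℙ) = c * ∫ ω, X π ω ∂ℙ := by
    intro c π
    rw [hscale]
    exact integral_const_mul c _
  constructor
  · -- strong arbitrage → ρ₁ < 0
    intro harb
    -- ρ(X 0) = 0
    have hX0 : X 0 = fun _ => 0 := by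
      rw [hX]; funext ω; simp
    have hρ0 : ρ (X 0) = 0 := by
      have := hpos (X 0) 0 le_rfl
      simp only [EReal.coe_zero, zero_mul] at this
      rw [← this]
      congr 1
    have hI0 : (∫ ω, X 0 ω ∂ℙ) = 0 := by rw [hX0]; simp
    obtain ⟨π', h1, h2⟩ := harb 0
    rw [hI0] at h1
    rw [hρ0] at h2
    -- ρ (X π') is a negative real
    have hne_top : ρ (X π') ≠ ⊤ := fun h => by simp [h] at h2
    set a := (ρ (X π')).toReal with ha
    have hcoe : ((a : ℝ) : EReal) = ρ (X π') := EReal.coe_toReal hne_top (hbot _)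
    have haneg : a < 0 := by
      have : ((a : ℝ) : EReal) < ((0:ℝ) : EReal) := by rw [hcoe]; exact_mod_cast h2
      exact_mod_cast this
    set μ := ∫ ω, X π' ω ∂ℙ with hμ
    have hμpos : 0 < μ := h1
    have hmem : (↑(μ⁻¹ * a) : EReal) ∈
        {v : EReal | ∃ π : Fin d → ℝ, (∫ ω, X π ω ∂ℙ) = 1 ∧ v = ρ (X π)} := by
      refine ⟨fun i => μ⁻¹ * π' i, ?_, ?_⟩
      · rw [hscaleInt, ← hμ, inv_mul_cancel₀ hμpos.ne']
      · rw [hscale, hpos _ _ (by positivity), ← hcoe, ← EReal.coe_mul]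
    calc sInf {v : EReal | ∃ π : Fin d → ℝ, (∫ ω, X π ω ∂ℙ) = 1 ∧ v = ρ (X π)}
        ≤ (↑(μ⁻¹ * a) : EReal) := sInf_le hmem
      _ < 0 := by
          have : μ⁻¹ * a < 0 := mul_neg_of_pos_of_neg (by positivity) haneg
          exact_mod_cast this
  · -- ρ₁ < 0 → strong arbitrage
    intro hinf π
    obtain ⟨v, ⟨π₁, hπ₁, hv⟩, hvneg⟩ := sInf_lt_iff.mp hinf
    -- v is a negative real
    have hne_top : v ≠ ⊤ := fun h => by simp [h] at hvneg
    have hne_bot : v ≠ ⊥ := hv ▸ hbot _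
    set a := v.toReal with ha
    have hcoe : ((a : ℝ) : EReal) = v := EReal.coe_toReal hne_top hne_bot
    have haneg : a < 0 := by
      have : ((a : ℝ) : EReal) < ((0:ℝ) : EReal) := by rw [hcoe]; exact_mod_cast hvneg
      exact_mod_cast this
    set m := ∫ ω, X π ω ∂ℙ with hm
    -- find a real c with ↑c < ρ(X π)
    have hbotlt : (⊥ : EReal) < ρ (X π) := Ne.bot_lt (hbot _)
    obtain ⟨c, -, hc2⟩ := EReal.lt_iff_exists_real_btwn.mp hbotlt
    set lam := max (max (m + 1) (c / a + 1)) 1 with hlam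
    have hlam_pos : 0 < lam := lt_of_lt_of_le one_pos (le_max_right _ _)
    have hlam_gt_m : m < lam :=
      lt_of_lt_of_le (lt_add_one m) (le_trans (le_max_left _ _) (le_max_left _ _))
    have hlam_gt : c / a < lam :=
      lt_of_lt_of_le (lt_add_one _) (le_trans (le_max_right _ _) (le_max_left _ _))
    have hla : lam * a < c := by
      have := (div_lt_iff_of_neg haneg).mp hlam_gt
      linarith [this]
    refine ⟨fun i => lam * π₁ i, ?_, ?_⟩
    · rw [hscaleInt, hπ₁, mul_one]; exact hlam_gt_m
    · rw [hscale, hpos _ _ hlam_pos.le, ← hv, ← hcoe, ← EReal.coe_mul]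
      calc ((lam * a : ℝ) : EReal) < ((c : ℝ) : EReal) := by exact_mod_cast hla
        _ < ρ (X π) := hc2
end
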